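/- Fix η ∈ ℝ. Consider γ± solving γ'' + νγ = 0 on I± = (0, ±1/2) with the anti-Kirchhoff conditions γ⁺(0) = −γ⁻(0), (γ⁺)'(0) = −(γ⁻)'(0), and quasi-periodic conditions γ⁻(−1/2) = e^{iη}γ⁺(1/2), (γ⁻)'(−1/2) = e^{iη}(γ⁺)'(1/2). The eigenvalues are exactly ν = (η + (2k+1)π)² for k ∈ ℤ, with eigenfunctions γ±(x) = ±e^{−i(η + (2k+1)π)x}. -/

import Mathlib

/-!
The eigenfunctions are checked by direct computation: `γ(x) = e^{-iθx}` with `θ = η + (2k+1)π`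
solves `γ'' + θ²γ = 0`, and `γ(-1/2) / γ(1/2) = e^{iθ} = -e^{iη}`.

Conversely, write `ν = ω²`. Constancy of the Wronskians against `cos (ωx)` and `sin (ωx) / ω`
shows that every solution is `f(0) cos (ωx) + f'(0) sin (ωx) / ω`. With `A = γ⁺(0)`, `B = (γ⁺)'(0)`
and `E = e^{iη}`, the quasi-periodic conditions become a `2 × 2` linear system in `(A, B)`
whose determinant is `cos²(ω/2) (1 + E)² + sin²(ω/2) (1 - E)² = 2E (cos η + cos ω)`.
A nonzero solution forces `cos ω = -cos η = cos (η + π)`, i.e. `ω = ±(η + π) + 2kπ`.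
-/

/-- Eigenfunction of the anti-Kirchhoff quasi-periodic 1D model:
`γ(x) = e^{−i(η + (2k+1)π)x}`; the eigenpair is `(γ⁺, γ⁻) = (γ, −γ)`. -/
noncomputable def gammaAK (η : ℝ) (k : ℤ) (x : ℝ) : ℂ :=
  Complex.exp (-Complex.I * ((η : ℂ) + (2 * (k : ℂ) + 1) * (Real.pi : ℂ)) * (x : ℂ))

open Complex Set
open scoped Real

lemma hasDerivAt_cexp_mul_ofReal (c : ℂ) (x : ℝ) :
    HasDerivAt (fun y : ℝ => exp (c * y)) (c * exp (c * x)) x := by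
  simpa [mul_comm] using ((hasDerivAt_id x).ofReal_comp.const_mul c).cexp

lemma hasDerivAt_ccos_mul_ofReal (c : ℂ) (x : ℝ) :
    HasDerivAt (fun y : ℝ => cos (c * y)) (-(c * sin (c * x))) x := by
  simpa [Function.comp_def, mul_comm] using
    (hasDerivAt_cos _).comp x ((hasDerivAt_id x).ofReal_comp.const_mul c)

lemma hasDerivAt_csin_mul_ofReal (c : ℂ) (x : ℝ) :
    HasDerivAt (fun y : ℝ => sin (c * y)) (c * cos (c * x)) x := by
  simpa [Function.comp_def, mul_comm] using
    (hasDerivAt_sin _).comp x ((hasDerivAt_id x).ofReal_comp.const_mul c)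

section Eigenfunction

variable (η : ℝ) (k : ℤ)

lemma hasDerivAt_gammaAK (x : ℝ) :
    HasDerivAt (gammaAK η k)
      (-I * ((η : ℂ) + (2 * (k : ℂ) + 1) * (π : ℂ)) * gammaAK η k x) x :=
  hasDerivAt_cexp_mul_ofReal _ x

lemma deriv_gammaAK :
    deriv (gammaAK η k) =
      fun x => -I * ((η : ℂ) + (2 * (k : ℂ) + 1) * (π : ℂ)) * gammaAK η k x :=
  funext fun x => (hasDerivAt_gammaAK η k x).deriv

lemma deriv_deriv_gammaAK (x : ℝ) :
    deriv (deriv (gammaAK η k)) x =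
      -((η : ℂ) + (2 * (k : ℂ) + 1) * (π : ℂ)) ^ 2 * gammaAK η k x := by
  rw [deriv_gammaAK, ((hasDerivAt_gammaAK η k x).const_mul _).deriv]
  linear_combination (((η : ℂ) + (2 * (k : ℂ) + 1) * (π : ℂ)) ^ 2 * gammaAK η k x) * I_sq

lemma gammaAK_neg_half :
    gammaAK η k (-(1 / 2)) = -exp (I * η) * gammaAK η k (1 / 2) := by
  have hexp : -I * ((η : ℂ) + (2 * (k : ℂ) + 1) * (π : ℂ)) * ((-(1 / 2) : ℝ) : ℂ) =
      I * η + -I * ((η : ℂ) + (2 * (k : ℂ) + 1) * (π : ℂ)) * ((1 / 2 : ℝ) : ℂ) +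
        (k * (2 * π * I) + π * I) := by
    push_cast; ring
  rw [gammaAK, hexp, exp_add, exp_add, exp_add, exp_int_mul_two_pi_mul_I, exp_pi_mul_I, gammaAK]
  ring

end Eigenfunction

-- The solution of `f'' + ω² f = 0` with `f 0 = 0`, `f' 0 = 1`, including the limit case `ω = 0`.
noncomputable def sinDiv (ω : ℂ) (x : ℝ) : ℂ := if ω = 0 then x else sin (ω * x) / ω

section SinDiv

variable (ω : ℂ) (x : ℝ)

lemma sinDiv_zero : sinDiv ω 0 = 0 := by
  by_cases h : ω = 0 <;> simp [sinDiv, h]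

lemma sinDiv_neg : sinDiv ω (-x) = -sinDiv ω x := by
  by_cases h : ω = 0
  · simp [sinDiv, h]
  · simp only [sinDiv, if_neg h, ofReal_neg, mul_neg, sin_neg, neg_div]

lemma hasDerivAt_sinDiv : HasDerivAt (sinDiv ω) (cos (ω * x)) x := by
  by_cases h : ω = 0
  · subst h
    have hfun : sinDiv 0 = fun y : ℝ => (y : ℂ) := funext fun y => if_pos rfl
    rw [hfun, zero_mul, cos_zero]
    exact (hasDerivAt_id x).ofReal_comp
  · have hfun : sinDiv ω = fun y : ℝ => sin (ω * y) / ω := funext fun y => if_neg h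
    simpa [hfun, mul_div_cancel_left₀ _ h] using (hasDerivAt_csin_mul_ofReal ω x).div_const ω

lemma sq_mul_sinDiv_sq : ω ^ 2 * sinDiv ω x ^ 2 = sin (ω * x) ^ 2 := by
  by_cases h : ω = 0
  · simp [sinDiv, h]
  · simp only [sinDiv, if_neg h]
    field_simp

lemma mul_sin_eq_sq_mul_sinDiv : ω * sin (ω * x) = ω ^ 2 * sinDiv ω x := by
  by_cases h : ω = 0
  · simp [sinDiv, h]
  · simp only [sinDiv, if_neg h]
    field_simp

end SinDiv

theorem eq_of_hasDerivAt_zero_Icc {E : Type*} [NormedAddCommGroup E] [NormedSpace ℝ E]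
    {W : ℝ → E} {a b : ℝ} (hW : ∀ x ∈ Icc a b, HasDerivAt W 0 x) {x y : ℝ}
    (hx : x ∈ Icc a b) (hy : y ∈ Icc a b) : W x = W y := by
  have hconst := constant_of_has_deriv_right_zero
    (fun z hz => (hW z hz).continuousAt.continuousWithinAt)
    (fun z hz => (hW z (Ico_subset_Icc_self hz)).hasDerivWithinAt)
  rw [hconst x hx, hconst y hy]

-- The two conserved quantities are the Wronskians of `f` against `sinDiv ω` and `cos (ω ·)`.
theorem eq_cos_add_sinDiv_of_hasDerivAt {ω : ℂ} {f f' f'' : ℝ → ℂ} {a b : ℝ}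
    (h0 : 0 ∈ Icc a b) (hf : ∀ x ∈ Icc a b, HasDerivAt f (f' x) x)
    (hf' : ∀ x ∈ Icc a b, HasDerivAt f' (f'' x) x)
    (hode : ∀ x ∈ Icc a b, f'' x + ω ^ 2 * f x = 0) {x : ℝ} (hx : x ∈ Icc a b) :
    f x = f 0 * cos (ω * x) + f' 0 * sinDiv ω x ∧
      f' x = -ω ^ 2 * f 0 * sinDiv ω x + f' 0 * cos (ω * x) := by
  have hW₁ : ∀ y ∈ Icc a b,
      HasDerivAt (fun y => f y * cos (ω * y) - f' y * sinDiv ω y) 0 y := by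
    intro y hy
    refine (((hf y hy).mul (hasDerivAt_ccos_mul_ofReal ω y)).sub
      ((hf' y hy).mul (hasDerivAt_sinDiv ω y))).congr_deriv ?_
    linear_combination -(f y) * mul_sin_eq_sq_mul_sinDiv ω y - sinDiv ω y * hode y hy
  have hW₂ : ∀ y ∈ Icc a b,
      HasDerivAt (fun y => -ω ^ 2 * (f y * sinDiv ω y) - f' y * cos (ω * y)) 0 y := by
    intro y hy
    refine ((((hf y hy).mul (hasDerivAt_sinDiv ω y)).const_mul (-ω ^ 2)).sub
      ((hf' y hy).mul (hasDerivAt_ccos_mul_ofReal ω y))).congr_deriv ?_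
    linear_combination f' y * mul_sin_eq_sq_mul_sinDiv ω y - cos (ω * y) * hode y hy
  have e₁ := eq_of_hasDerivAt_zero_Icc hW₁ hx h0
  have e₂ := eq_of_hasDerivAt_zero_Icc hW₂ hx h0
  simp only [sinDiv_zero, ofReal_zero, mul_zero, cos_zero, mul_one, sub_zero, zero_sub]
    at e₁ e₂
  have hpyth : cos (ω * x) ^ 2 + ω ^ 2 * sinDiv ω x ^ 2 = 1 := by
    rw [sq_mul_sinDiv_sq]
    exact cos_sq_add_sin_sq _
  constructor
  · linear_combination cos (ω * x) * e₁ - sinDiv ω x * e₂ - f x * hpyth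
  · linear_combination -ω ^ 2 * sinDiv ω x * e₁ - cos (ω * x) * e₂ - f' x * hpyth

theorem eq_cos_add_sinDiv_of_contDiff {ω : ℂ} {f : ℝ → ℂ} (hf : ContDiff ℝ 2 f) {a b : ℝ}
    (h0 : 0 ∈ Icc a b) (hode : ∀ x ∈ Icc a b, deriv (deriv f) x + ω ^ 2 * f x = 0)
    {x : ℝ} (hx : x ∈ Icc a b) :
    f x = f 0 * cos (ω * x) + deriv f 0 * sinDiv ω x ∧
      deriv f x = -ω ^ 2 * f 0 * sinDiv ω x + deriv f 0 * cos (ω * x) :=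
  eq_cos_add_sinDiv_of_hasDerivAt h0
    (fun y _ => (hf.differentiable (by norm_num) y).hasDerivAt)
    (fun y _ => (hf.differentiable_deriv_two y).hasDerivAt) hode hx

theorem mul_sub_mul_eq_zero_of_linear_system {R : Type*} [CommRing R] [NoZeroDivisors R]
    {a b c d x y : R} (h₁ : a * x + b * y = 0) (h₂ : c * x + d * y = 0) (hxy : x ≠ 0 ∨ y ≠ 0) :
    a * d - b * c = 0 := by
  rcases hxy with hx | hy
  · refine (mul_eq_zero.mp ?_).resolve_right hx
    linear_combination d * h₁ - b * h₂
  · refine (mul_eq_zero.mp ?_).resolve_right hy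
    linear_combination a * h₂ - c * h₁

theorem cos_sq_mul_one_add_exp_sq_add_sin_sq_mul_one_sub_exp_sq (η z : ℂ) :
    cos z ^ 2 * (1 + exp (I * η)) ^ 2 + sin z ^ 2 * (1 - exp (I * η)) ^ 2 =
      2 * exp (I * η) * (cos η + cos (2 * z)) := by
  have hcos : 2 * exp (I * η) * cos η = exp (I * η) ^ 2 + 1 := by
    have hinv : exp (I * η) * exp (-η * I) = 1 := by
      rw [← exp_add, ← exp_zero]
      ring_nf
    rw [cos, mul_comm η I]
    linear_combination hinv
  rw [cos_two_mul']
  linear_combination -hcos + (1 + exp (I * η) ^ 2) * cos_sq_add_sin_sq z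

theorem exists_int_sq_eq_of_cos_add_cos_eq_zero {η ω : ℂ} (h : cos η + cos ω = 0) :
    ∃ k : ℤ, ω ^ 2 = (η + (2 * k + 1) * π) ^ 2 := by
  have hcos : cos (η + π) = cos ω := by
    rw [cos_add_pi]
    linear_combination -h
  obtain ⟨k, hk | hk⟩ := cos_eq_cos_iff.mp hcos
  · exact ⟨k, by rw [hk]; ring⟩
  · exact ⟨-k, by rw [hk]; push_cast; ring⟩

theorem exists_int_sq_eq_of_antiKirchhoff (η : ℝ) {ω : ℂ} {gp gm : ℝ → ℂ}
    (hgp : ContDiff ℝ 2 gp) (hgm : ContDiff ℝ 2 gm)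
    (hodep : ∀ x ∈ Icc (0 : ℝ) (1 / 2), deriv (deriv gp) x + ω ^ 2 * gp x = 0)
    (hodem : ∀ x ∈ Icc (-(1 / 2) : ℝ) 0, deriv (deriv gm) x + ω ^ 2 * gm x = 0)
    (hbc : gp 0 = -(gm 0)) (hbc' : deriv gp 0 = -(deriv gm 0))
    (hqp : gm (-(1 / 2)) = exp (I * η) * gp (1 / 2))
    (hqp' : deriv gm (-(1 / 2)) = exp (I * η) * deriv gp (1 / 2))
    (hnz : (∃ x ∈ Icc (0 : ℝ) (1 / 2), gp x ≠ 0) ∨ (∃ x ∈ Icc (-(1 / 2) : ℝ) 0, gm x ≠ 0)) :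
    ∃ k : ℤ, ω ^ 2 = ((η : ℂ) + (2 * (k : ℂ) + 1) * π) ^ 2 := by
  have hrepp := fun x (hx : x ∈ Icc (0 : ℝ) (1 / 2)) =>
    eq_cos_add_sinDiv_of_contDiff hgp (by norm_num) hodep hx
  have hrepm := fun x (hx : x ∈ Icc (-(1 / 2) : ℝ) 0) =>
    eq_cos_add_sinDiv_of_contDiff hgm (by norm_num) hodem hx
  rw [show gm 0 = -gp 0 by linear_combination hbc,
    show deriv gm 0 = -deriv gp 0 by linear_combination hbc'] at hrepm
  obtain ⟨hp, hp'⟩ := hrepp (1 / 2) (by norm_num)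
  obtain ⟨hm, hm'⟩ := hrepm (-(1 / 2)) (by norm_num)
  simp only [sinDiv_neg, ofReal_neg, mul_neg, cos_neg] at hm hm'
  have hAB : gp 0 ≠ 0 ∨ deriv gp 0 ≠ 0 := by
    by_contra! hAB
    rcases hnz with ⟨x, hx, hne⟩ | ⟨x, hx, hne⟩
    · exact hne (by rw [(hrepp x hx).1, hAB.1, hAB.2]; ring)
    · exact hne (by rw [(hrepm x hx).1, hAB.1, hAB.2]; ring)
  have hdet := cos_sq_mul_one_add_exp_sq_add_sin_sq_mul_one_sub_exp_sq η (ω * (1 / 2 : ℝ))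
  rw [show 2 * (ω * ((1 / 2 : ℝ) : ℂ)) = ω by push_cast; ring,
    ← sq_mul_sinDiv_sq] at hdet
  set E := exp (I * η)
  set C := cos (ω * (1 / 2 : ℝ))
  set S := sinDiv ω (1 / 2)
  have hsystem := mul_sub_mul_eq_zero_of_linear_system
    (a := -C * (1 + E)) (b := S * (1 - E)) (c := -ω ^ 2 * S * (1 - E)) (d := -C * (1 + E))
    (by linear_combination -hm + hqp + E * hp) (by linear_combination -hm' + hqp' + E * hp') hAB
  have hE : 2 * E ≠ 0 := mul_ne_zero two_ne_zero (exp_ne_zero _)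
  have hsum : cos η + cos ω = 0 := by
    refine (mul_eq_zero.mp ?_).resolve_left hE
    linear_combination hsystem - hdet
  exact exists_int_sq_eq_of_cos_add_cos_eq_zero hsum

/-- The 1D model with anti-Kirchhoff conditions `γ⁺(0) = −γ⁻(0)`,
`(γ⁺)'(0) = −(γ⁻)'(0)` and quasi-periodic conditions of parameter `η` has
eigenvalues exactly `ν = (η + (2k+1)π)²`, `k ∈ ℤ`, with eigenfunctions
`γ±(x) = ±e^{−i(η + (2k+1)π)x}`. -/
theorem stmt_13 (η : ℝ) :
    (∀ k : ℤ,
      (∀ x : ℝ, deriv (deriv (gammaAK η k)) x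
          + ((η : ℂ) + (2 * (k : ℂ) + 1) * (Real.pi : ℂ)) ^ 2 * gammaAK η k x = 0) ∧
      (∀ x : ℝ, deriv (deriv (fun y : ℝ => -gammaAK η k y)) x
          + ((η : ℂ) + (2 * (k : ℂ) + 1) * (Real.pi : ℂ)) ^ 2 * (-gammaAK η k x) = 0) ∧
      gammaAK η k 0 = -(-gammaAK η k 0) ∧
      deriv (gammaAK η k) 0 = -(deriv (fun y : ℝ => -gammaAK η k y) 0) ∧
      (-gammaAK η k (-(1 / 2))) =
        Complex.exp (Complex.I * (η : ℂ)) * gammaAK η k (1 / 2) ∧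
      deriv (fun y : ℝ => -gammaAK η k y) (-(1 / 2)) =
        Complex.exp (Complex.I * (η : ℂ)) * deriv (gammaAK η k) (1 / 2)) ∧
    (∀ (ν : ℂ) (gp gm : ℝ → ℂ), ContDiff ℝ 2 gp → ContDiff ℝ 2 gm →
      (∀ x ∈ Set.Icc (0 : ℝ) (1 / 2), deriv (deriv gp) x + ν * gp x = 0) →
      (∀ x ∈ Set.Icc (-(1 / 2) : ℝ) 0, deriv (deriv gm) x + ν * gm x = 0) →
      gp 0 = -(gm 0) → deriv gp 0 = -(deriv gm 0) →
      gm (-(1 / 2)) = Complex.exp (Complex.I * (η : ℂ)) * gp (1 / 2) →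
      deriv gm (-(1 / 2)) = Complex.exp (Complex.I * (η : ℂ)) * deriv gp (1 / 2) →
      ((∃ x ∈ Set.Icc (0 : ℝ) (1 / 2), gp x ≠ 0) ∨
        (∃ x ∈ Set.Icc (-(1 / 2) : ℝ) 0, gm x ≠ 0)) →
      ∃ k : ℤ, ν = ((η : ℂ) + (2 * (k : ℂ) + 1) * (Real.pi : ℂ)) ^ 2) := by
  refine ⟨fun k => ?_, fun ν gp gm hgp hgm hodep hodem hbc hbc' hqp hqp' hnz => ?_⟩
  · refine ⟨fun x => ?_, fun x => ?_, by ring, ?_, ?_, ?_⟩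
    · rw [deriv_deriv_gammaAK]
      ring
    · rw [deriv.fun_neg', deriv.fun_neg, deriv_deriv_gammaAK]
      ring
    · rw [deriv.fun_neg']
      ring
    · rw [gammaAK_neg_half]
      ring
    · rw [deriv.fun_neg', deriv_gammaAK]
      dsimp only
      rw [gammaAK_neg_half]
      ring
  · obtain ⟨ω, rfl⟩ := IsAlgClosed.exists_pow_nat_eq ν two_pos
    exact exists_int_sq_eq_of_antiKirchhoff η hgp hgm hodep hodem hbc hbc' hqp hqp' hnz
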